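/- arXiv:1805.02414 — 3 statements merged into one kernel-verified Lean document; each statement's English description precedes it below -/
import Mathlib

section
/- For every integer k ≥ 0 and every point x ∈ ℝ³ with |x| = 1, the sum over l from −k to k of |u_{k,l}(x)|² equals (2k+1)/(4π). (Unsöld's theorem.) -/
open MeasureTheory Finset

noncomputable section

/-- The normalizing constant `C_{k,l} = √(((2k+1)/(4π)) · (k+l)! · (k−l)!)`. -/
def sphC (k : ℕ) (l : ℤ) : ℝ :=
  Real.sqrt ((2 * k + 1) / (4 * Real.pi) * ((k : ℤ) + l).toNat.factorial *
    ((k : ℤ) - l).toNat.factorial)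

/-- The solid spherical harmonic `u_{k,l}` on `ℝ³`, with `w = x + iy`:
`u_{k,l} = C_{k,l} Σ_{p+q+s=k, p−q=l} (1/(p!q!s!)) (−w/2)^p (w̄/2)^q z^s`. -/
def uSH (k : ℕ) (l : ℤ) (x : EuclideanSpace ℝ (Fin 3)) : ℂ :=
  (sphC k l : ℂ) *
    ∑ p ∈ Finset.range (k + 1), ∑ q ∈ Finset.range (k + 1),
      if (p : ℤ) - (q : ℤ) = l ∧ p + q ≤ k then
        (1 / ((p.factorial : ℂ) * (q.factorial : ℂ) * ((k - p - q).factorial : ℂ))) *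
          (-(((x 0 : ℂ) + Complex.I * (x 1 : ℂ)) / 2)) ^ p *
          ((((x 0 : ℂ) - Complex.I * (x 1 : ℂ))) / 2) ^ q *
          ((x 2 : ℂ)) ^ (k - p - q)
      else 0

/-!
Write `X = -w/2`, `Y = w̄/2`, `Z = z`, so that `u_{k,l} = C_{k,l} A_{k,l}(X,Y,Z)` where `A_{k,l}`
is the part of `(X + Y + Z)^k / k!` in which the exponents of `X` and `Y` differ by `l`. On the unit
sphere `conj X = -Y`, `Z` is real and `Z² - 4XY = z² + |w|² = 1`, so it suffices to prove the
polynomial identity `∑_l (n+l)! (n-l)! A_{n,l}(X,Y,Z) A_{n,l}(-Y,-X,Z) = (Z² - 4XY)^n`.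
This goes by induction on `n`: the second factor of the sum at `n + 1` is expanded by the
three-term recursion `(n+1) A_{n+1,l} = X A_{n,l-1} + Y A_{n,l+1} + Z A_{n,l}`, the sum is
reindexed, and the resulting combination of `A_{n+1,·}` collapses to `(n+1)(Z² - 4XY) A_{n,m}`.
Both identities are checked coefficientwise, since multiplying by a variable only shifts an
exponent.
-/

section GradedExpSum

open Finset.Nat

variable {K : Type*} [Field K] {d : ℕ}

/-- For `g = 1` this is the part of `(∑ i, V i) ^ n / n!` of `φ`-grade `l`, by the multinomial
theorem; the weight `g` records the multipliers produced by `mul_gradedExpSum`. -/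
def gradedExpSum (φ : (Fin d → ℕ) →+ ℤ) (V : Fin d → K) (n : ℕ) (l : ℤ)
    (g : (Fin d → ℕ) → K) : K :=
  ∑ e ∈ antidiagonalTuple d n with φ e = l, g e * ∏ i, V i ^ e i / (e i).factorial

variable (φ : (Fin d → ℕ) →+ ℤ) (V : Fin d → K) (n : ℕ) (l : ℤ)

theorem mul_pow_div_factorial [CharZero K] (v : K) (m : ℕ) :
    v * (v ^ m / m.factorial) = (m + 1 : K) * (v ^ (m + 1) / (m + 1).factorial) := by
  rw [Nat.factorial_succ]
  push_cast
  field_simp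
  ring

theorem mul_prod_pow_div_factorial [CharZero K] (e : Fin d → ℕ) (j : Fin d) :
    V j * ∏ i, V i ^ e i / (e i).factorial =
      (e j + 1 : K) * ∏ i, V i ^ (e + Pi.single j 1 : Fin d → ℕ) i /
        ((e + Pi.single j 1 : Fin d → ℕ) i).factorial := by
  rw [Fintype.prod_eq_mul_prod_compl j, Fintype.prod_eq_mul_prod_compl j, ← mul_assoc,
    mul_pow_div_factorial, mul_assoc]
  congr 2
  · simp
  · refine Finset.prod_congr rfl fun i hi => ?_
    rw [Finset.mem_compl, Finset.mem_singleton] at hi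
    simp [Ne.symm hi]

theorem sub_single_add_single {e : Fin d → ℕ} {j : Fin d} (h : e j ≠ 0) :
    e - Pi.single j 1 + Pi.single j 1 = e := by
  ext i
  by_cases hi : i = j
  · subst hi
    simp only [Pi.add_apply, Pi.sub_apply, Pi.single_eq_same]
    omega
  · simp [hi]

theorem mul_gradedExpSum [CharZero K] (j : Fin d) (g : (Fin d → ℕ) → K) {l' : ℤ}
    (hl : l + φ (Pi.single j 1) = l') :
    V j * gradedExpSum φ V n l g =
      gradedExpSum φ V (n + 1) l' (fun e => e j * g (e - Pi.single j 1)) := by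
  subst hl
  set s : Fin d → ℕ := Pi.single j 1
  rw [gradedExpSum, Finset.mul_sum]
  have hmap : ((antidiagonalTuple d n).filter (φ · = l)).map (addRightEmbedding s) ⊆
      (antidiagonalTuple d (n + 1)).filter (φ · = l + φ s) := by
    intro e he
    simp only [Finset.mem_map, Finset.mem_filter, mem_antidiagonalTuple,
      addRightEmbedding_apply] at he ⊢
    obtain ⟨e, ⟨hsum, hgr⟩, rfl⟩ := he
    simp [s, Finset.sum_add_distrib, hsum, hgr]
  rw [gradedExpSum, ← Finset.sum_subset hmap, Finset.sum_map]
  · refine Finset.sum_congr rfl fun e _ => ?_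
    simp only [addRightEmbedding_apply, add_tsub_cancel_right]
    rw [mul_left_comm, mul_prod_pow_div_factorial]
    simp only [Pi.add_apply, Pi.single_eq_same, Nat.cast_add, Nat.cast_one, s]
    ring
  · intro e he hnot
    suffices e j = 0 by simp [this]
    by_contra hj
    apply hnot
    simp only [Finset.mem_filter, mem_antidiagonalTuple, Finset.mem_map,
      addRightEmbedding_apply] at he ⊢
    have hes : e - s + s = e := sub_single_add_single hj
    refine ⟨e - s, ⟨?_, ?_⟩, hes⟩
    · have := he.1
      rw [← hes] at this
      simpa [Finset.sum_add_distrib, s] using this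
    · have := he.2
      rw [← hes, map_add] at this
      linarith

theorem gradedExpSum_congr {g g' : (Fin d → ℕ) → K}
    (h : ∀ e, ∑ i, e i = n → φ e = l → g e = g' e) :
    gradedExpSum φ V n l g = gradedExpSum φ V n l g' := by
  refine Finset.sum_congr rfl fun e he => ?_
  rw [Finset.mem_filter, mem_antidiagonalTuple] at he
  rw [h e he.1 he.2]

theorem gradedExpSum_add (g g' : (Fin d → ℕ) → K) :
    gradedExpSum φ V n l (fun e => g e + g' e) =
      gradedExpSum φ V n l g + gradedExpSum φ V n l g' := by
  simp only [gradedExpSum, add_mul, Finset.sum_add_distrib]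

theorem gradedExpSum_sub (g g' : (Fin d → ℕ) → K) :
    gradedExpSum φ V n l (fun e => g e - g' e) =
      gradedExpSum φ V n l g - gradedExpSum φ V n l g' := by
  simp only [gradedExpSum, sub_mul, Finset.sum_sub_distrib]

theorem gradedExpSum_const_mul (c : K) (g : (Fin d → ℕ) → K) :
    gradedExpSum φ V n l (fun e => c * g e) = c * gradedExpSum φ V n l g := by
  simp only [gradedExpSum, mul_assoc, Finset.mul_sum]

theorem map_gradedExpSum {L : Type*} [Field L] (σ : K →+* L) (g : (Fin d → ℕ) → K) :
    σ (gradedExpSum φ V n l g) = gradedExpSum φ (σ ∘ V) n l (σ ∘ g) := by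
  simp [gradedExpSum]

end GradedExpSum

theorem sum_Icc_mul_shift {R : Type*} [Semiring R] (F G : ℤ → R) (n : ℕ) {c : ℤ}
    (hc : |c| ≤ 1)
    (hG : ∀ m ∉ Finset.Icc (-(n : ℤ)) n, G m = 0) :
    ∑ l ∈ Finset.Icc (-((n + 1 : ℕ) : ℤ)) (n + 1 : ℕ), F l * G (l + c) =
      ∑ m ∈ Finset.Icc (-(n : ℤ)) n, F (m - c) * G m := by
  have hsub : Finset.Icc (-(n : ℤ)) n ⊆
      Finset.Icc (-((n + 1 : ℕ) : ℤ) + c) ((n + 1 : ℕ) + c) := by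
    intro m
    simp only [Finset.mem_Icc, abs_le] at hc ⊢
    omega
  rw [Finset.sum_subset hsub fun m _ hm => by rw [hG m hm, mul_zero],
    ← Finset.map_add_right_Icc, Finset.sum_map]
  simp

section Harmonic

variable {K : Type*} [Field K]

def sphGrade : (Fin 3 → ℕ) →+ ℤ where
  toFun e := e 0 - e 1
  map_zero' := by simp
  map_add' e e' := by simp only [Pi.add_apply]; push_cast; ring

/-- `u_{k,l} = C_{k,l} · harmonicPoly X Y Z k l` with `X = -w/2`, `Y = w̄/2`, `Z = z`. -/
def harmonicPoly (X Y Z : K) (n : ℕ) (l : ℤ) : K :=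
  gradedExpSum sphGrade ![X, Y, Z] n l fun _ => 1

variable (X Y Z : K)

theorem harmonicPoly_eq_zero {n : ℕ} {l : ℤ} (hl : l ∉ Finset.Icc (-(n : ℤ)) n) :
    harmonicPoly X Y Z n l = 0 := by
  rw [harmonicPoly, gradedExpSum]
  refine Finset.sum_eq_zero fun e he => absurd ?_ hl
  simp only [Finset.mem_filter, Finset.Nat.mem_antidiagonalTuple, Fin.sum_univ_three] at he
  obtain ⟨hn, rfl⟩ := he
  simp only [sphGrade, AddMonoidHom.coe_mk, ZeroHom.coe_mk, Finset.mem_Icc]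
  omega

theorem sum_range_sum_range_eq_harmonicPoly (n : ℕ) (l : ℤ) :
    ∑ p ∈ Finset.range (n + 1), ∑ q ∈ Finset.range (n + 1),
      (if (p : ℤ) - (q : ℤ) = l ∧ p + q ≤ n then
        (1 / ((p.factorial : K) * (q.factorial : K) * ((n - p - q).factorial : K))) *
          X ^ p * Y ^ q * Z ^ (n - p - q)
      else 0) = harmonicPoly X Y Z n l := by
  rw [← Finset.sum_product', ← Finset.sum_filter, harmonicPoly, gradedExpSum]
  refine Finset.sum_nbij' (fun pq => ![pq.1, pq.2, n - pq.1 - pq.2]) (fun e => (e 0, e 1))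
    ?_ ?_ ?_ ?_ ?_
  · intro pq hpq
    simp only [Finset.mem_filter, Finset.mem_product, Finset.mem_range] at hpq
    simp only [Finset.mem_filter, Finset.Nat.mem_antidiagonalTuple, Fin.sum_univ_three]
    simp only [Fin.isValue, Matrix.cons_val_zero, Matrix.cons_val_one, Matrix.cons_val, sphGrade,
      AddMonoidHom.coe_mk, ZeroHom.coe_mk]
    omega
  · intro e he
    simp only [Finset.mem_filter, Finset.Nat.mem_antidiagonalTuple, Fin.sum_univ_three,
      Finset.mem_product, Finset.mem_range] at he ⊢
    simp only [sphGrade, AddMonoidHom.coe_mk, ZeroHom.coe_mk] at he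
    omega
  · intro pq _
    simp
  · intro e he
    simp only [Finset.mem_filter, Finset.Nat.mem_antidiagonalTuple, Fin.sum_univ_three] at he
    ext i
    fin_cases i
    · rfl
    · rfl
    · change n - e 0 - e 1 = e 2
      omega
  · intro pq _
    simp only [Fin.prod_univ_three, Finset.prod_div_distrib, Matrix.cons_val_zero,
      Matrix.cons_val_one, Matrix.cons_val]
    ring

variable [CharZero K]

theorem harmonicPoly_succ (n : ℕ) (l : ℤ) :
    (n + 1) * harmonicPoly X Y Z (n + 1) l =
      X * harmonicPoly X Y Z n (l - 1) + Y * harmonicPoly X Y Z n (l + 1) +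
        Z * harmonicPoly X Y Z n l := by
  have hX : X * harmonicPoly X Y Z n (l - 1) =
      gradedExpSum sphGrade ![X, Y, Z] (n + 1) l fun e => e 0 * 1 :=
    mul_gradedExpSum _ ![X, Y, Z] _ _ 0 _ (by simp [sphGrade])
  have hY : Y * harmonicPoly X Y Z n (l + 1) =
      gradedExpSum sphGrade ![X, Y, Z] (n + 1) l fun e => e 1 * 1 :=
    mul_gradedExpSum _ ![X, Y, Z] _ _ 1 _ (by simp [sphGrade])
  have hZ : Z * harmonicPoly X Y Z n l =
      gradedExpSum sphGrade ![X, Y, Z] (n + 1) l fun e => e 2 * 1 :=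
    mul_gradedExpSum _ ![X, Y, Z] _ _ 2 _ (by simp [sphGrade])
  rw [hX, hY, hZ, ← gradedExpSum_add, ← gradedExpSum_add, harmonicPoly,
    ← gradedExpSum_const_mul]
  refine gradedExpSum_congr _ _ _ _ fun e he _ => ?_
  simp only [Fin.sum_univ_three] at he
  simp only [mul_one]
  exact_mod_cast congrArg (Nat.cast (R := K)) he.symm

theorem harmonicPoly_key_coeff {n : ℕ} {m : ℤ} {e : Fin 3 → ℕ} (hn : ∑ i, e i = n + 2)
    (hm : sphGrade e = m) :
    (n + 1 + m) * (n + 1 - m) * e 2 - (n + 2 + m) * (n + 1 + m) * e 1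
        - (n + 2 - m) * (n + 1 - m) * e 0
      = (n + 1) * (e 2 * ((e 2 - 1 : ℕ) : K) - 4 * e 0 * e 1) := by
  simp only [Fin.sum_univ_three] at hn
  simp only [sphGrade, AddMonoidHom.coe_mk, ZeroHom.coe_mk] at hm
  have hn' : (n : K) = e 0 + e 1 + e 2 - 2 := by
    rw [eq_sub_iff_add_eq]; exact_mod_cast hn.symm
  have hm' : (m : K) = e 0 - e 1 := by exact_mod_cast hm.symm
  have hpred : (e 2 : K) * ((e 2 - 1 : ℕ) : K) = e 2 * (e 2 - 1) := by
    rcases Nat.eq_zero_or_pos (e 2) with h | h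
    · simp [h]
    · rw [Nat.cast_pred h]
  rw [hpred, hn', hm']
  ring

theorem harmonicPoly_key (n : ℕ) (m : ℤ) :
    Z * ((n + 1 + m) * (n + 1 - m) * harmonicPoly X Y Z (n + 1) m)
      - Y * ((n + 2 + m) * (n + 1 + m) * harmonicPoly X Y Z (n + 1) (m + 1))
      - X * ((n + 2 - m) * (n + 1 - m) * harmonicPoly X Y Z (n + 1) (m - 1))
      = (n + 1) * (Z ^ 2 - 4 * X * Y) * harmonicPoly X Y Z n m := by
  set V := ![X, Y, Z]
  have hX : X * harmonicPoly X Y Z (n + 1) (m - 1) =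
      gradedExpSum sphGrade V (n + 2) m fun e => e 0 * 1 :=
    mul_gradedExpSum _ V _ _ 0 _ (by simp [sphGrade])
  have hY : Y * harmonicPoly X Y Z (n + 1) (m + 1) =
      gradedExpSum sphGrade V (n + 2) m fun e => e 1 * 1 :=
    mul_gradedExpSum _ V _ _ 1 _ (by simp [sphGrade])
  have hZ : Z * harmonicPoly X Y Z (n + 1) m =
      gradedExpSum sphGrade V (n + 2) m fun e => e 2 * 1 :=
    mul_gradedExpSum _ V _ _ 2 _ (by simp [sphGrade])
  have hZZ : Z * (Z * harmonicPoly X Y Z n m) =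
      gradedExpSum sphGrade V (n + 2) m
        fun e => e 2 * ((e - Pi.single 2 1 : Fin 3 → ℕ) 2 * 1) := by
    have hZ' : Z * harmonicPoly X Y Z n m =
        gradedExpSum sphGrade V (n + 1) m fun e => e 2 * 1 :=
      mul_gradedExpSum _ V _ _ 2 _ (by simp [sphGrade])
    rw [hZ']
    exact mul_gradedExpSum _ V _ _ 2 _ (by simp [sphGrade])
  have hXY : X * (Y * harmonicPoly X Y Z n m) =
      gradedExpSum sphGrade V (n + 2) m
        fun e => e 0 * ((e - Pi.single 0 1 : Fin 3 → ℕ) 1 * 1) := by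
    have hY' : Y * harmonicPoly X Y Z n m =
        gradedExpSum sphGrade V (n + 1) (m - 1) fun e => e 1 * 1 :=
      mul_gradedExpSum _ V _ _ 1 _ (by simp [sphGrade, sub_eq_add_neg])
    rw [hY']
    exact mul_gradedExpSum _ V _ _ 0 _ (by simp [sphGrade])
  have hweights : (gradedExpSum sphGrade V (n + 2) m fun e =>
      (n + 1 + m) * (n + 1 - m) * (e 2 * 1) - (n + 2 + m) * (n + 1 + m) * (e 1 * 1)
        - (n + 2 - m) * (n + 1 - m) * (e 0 * 1)
        - ((n + 1) * (e 2 * ((e - Pi.single 2 1 : Fin 3 → ℕ) 2 * 1))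
          - 4 * (n + 1) * (e 0 * ((e - Pi.single 0 1 : Fin 3 → ℕ) 1 * 1)))) = 0 := by
    rw [gradedExpSum_congr _ _ _ _ (g' := fun _ => 0)]
    · simp [gradedExpSum]
    intro e hn hm
    simp only [Pi.sub_apply, Pi.single_eq_same, ne_eq, Fin.reduceEq, not_false_eq_true,
      Pi.single_eq_of_ne, tsub_zero, mul_one]
    linear_combination harmonicPoly_key_coeff (K := K) hn hm
  simp only [gradedExpSum_sub, gradedExpSum_const_mul] at hweights
  linear_combination ((n + 1 + m) * (n + 1 - m) : K) * hZ
    - ((n + 2 + m) * (n + 1 + m) : K) * hY - ((n + 2 - m) * (n + 1 - m) : K) * hX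
    - (n + 1 : K) * hZZ + (4 * (n + 1) : K) * hXY + hweights

def factorialWeight (n : ℕ) (l : ℤ) : ℕ :=
  ((n : ℤ) + l).toNat.factorial * ((n : ℤ) - l).toNat.factorial

theorem factorialWeight_eq {n a b : ℕ} {l : ℤ} (ha : (a : ℤ) = n + l)
    (hb : (b : ℤ) = n - l) :
    factorialWeight n l = a.factorial * b.factorial := by
  rw [factorialWeight, ← ha, ← hb, Int.toNat_natCast, Int.toNat_natCast]

theorem harmonicPoly_key_factorialWeight {n : ℕ} {m : ℤ}
    (hm : m ∈ Finset.Icc (-(n : ℤ)) n) :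
    Z * (factorialWeight (n + 1) m * harmonicPoly X Y Z (n + 1) m)
      - Y * (factorialWeight (n + 1) (m + 1) * harmonicPoly X Y Z (n + 1) (m + 1))
      - X * (factorialWeight (n + 1) (m - 1) * harmonicPoly X Y Z (n + 1) (m - 1))
      = (n + 1) * (Z ^ 2 - 4 * X * Y) * (factorialWeight n m * harmonicPoly X Y Z n m) := by
  rw [Finset.mem_Icc] at hm
  obtain ⟨a, ha⟩ : ∃ a : ℕ, (a : ℤ) = n + m := ⟨_, Int.toNat_of_nonneg (by omega)⟩
  obtain ⟨b, hb⟩ : ∃ b : ℕ, (b : ℤ) = n - m := ⟨_, Int.toNat_of_nonneg (by omega)⟩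
  rw [factorialWeight_eq (a := a + 1) (b := b + 1) (by push_cast; omega)
      (by push_cast; omega),
    factorialWeight_eq (a := a + 2) (b := b) (by push_cast; omega) (by push_cast; omega),
    factorialWeight_eq (a := a) (b := b + 2) (by push_cast; omega) (by push_cast; omega),
    factorialWeight_eq ha hb]
  have ha' : (a : K) = n + m := by exact_mod_cast ha
  have hb' : (b : K) = n - m := by exact_mod_cast hb
  simp only [Nat.factorial_succ, Nat.cast_mul]
  push_cast
  rw [ha', hb']
  linear_combination (a.factorial * b.factorial : K) * harmonicPoly_key X Y Z n m

/-- When `conj X = -Y` and `Z` is real, `harmonicPoly (-Y) (-X) Z` is the complex conjugate of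
`harmonicPoly X Y Z`. -/
def harmonicPairing (X Y Z : K) (n : ℕ) : K :=
  ∑ l ∈ Finset.Icc (-(n : ℤ)) n,
    factorialWeight n l * harmonicPoly X Y Z n l * harmonicPoly (-Y) (-X) Z n l

theorem harmonicPairing_succ (n : ℕ) :
    harmonicPairing X Y Z (n + 1) = (Z ^ 2 - 4 * X * Y) * harmonicPairing X Y Z n := by
  apply mul_left_cancel₀ (Nat.cast_add_one_ne_zero n : (n + 1 : K) ≠ 0)
  set A := harmonicPoly X Y Z
  set A' := harmonicPoly (-Y) (-X) Z
  set WA : ℤ → K := fun l => factorialWeight (n + 1) l * A (n + 1) l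
  have hA' : ∀ m ∉ Finset.Icc (-(n : ℤ)) n, A' n m = 0 :=
    fun m hm => harmonicPoly_eq_zero _ _ _ hm
  calc (n + 1 : K) * harmonicPairing X Y Z (n + 1)
      = ∑ l ∈ Finset.Icc (-((n + 1 : ℕ) : ℤ)) (n + 1 : ℕ),
          WA l * ((n + 1) * A' (n + 1) l) := by
        rw [harmonicPairing, Finset.mul_sum]
        refine Finset.sum_congr rfl fun l _ => ?_
        ring
    _ = -Y * ∑ l ∈ Finset.Icc (-((n + 1 : ℕ) : ℤ)) (n + 1 : ℕ), WA l * A' n (l + -1)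
        + -X * ∑ l ∈ Finset.Icc (-((n + 1 : ℕ) : ℤ)) (n + 1 : ℕ), WA l * A' n (l + 1)
        + Z * ∑ l ∈ Finset.Icc (-((n + 1 : ℕ) : ℤ)) (n + 1 : ℕ), WA l * A' n (l + 0) := by
        simp only [harmonicPoly_succ, A', Finset.mul_sum, ← Finset.sum_add_distrib]
        refine Finset.sum_congr rfl fun l _ => ?_
        rw [add_zero, ← sub_eq_add_neg]
        ring
    _ = -Y * ∑ m ∈ Finset.Icc (-(n : ℤ)) n, WA (m - -1) * A' n m
        + -X * ∑ m ∈ Finset.Icc (-(n : ℤ)) n, WA (m - 1) * A' n m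
        + Z * ∑ m ∈ Finset.Icc (-(n : ℤ)) n, WA (m - 0) * A' n m := by
        rw [sum_Icc_mul_shift _ _ n (by norm_num) hA', sum_Icc_mul_shift _ _ n (by norm_num) hA',
          sum_Icc_mul_shift _ _ n (by norm_num) hA']
    _ = ∑ m ∈ Finset.Icc (-(n : ℤ)) n,
          (Z * WA m - Y * WA (m + 1) - X * WA (m - 1)) * A' n m := by
        simp only [Finset.mul_sum, ← Finset.sum_add_distrib, sub_neg_eq_add, sub_zero]
        refine Finset.sum_congr rfl fun m _ => ?_
        ring
    _ = ∑ m ∈ Finset.Icc (-(n : ℤ)) n,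
          (n + 1) * (Z ^ 2 - 4 * X * Y) * (factorialWeight n m * A n m) * A' n m :=
        Finset.sum_congr rfl fun m hm => by rw [harmonicPoly_key_factorialWeight X Y Z hm]
    _ = (n + 1) * ((Z ^ 2 - 4 * X * Y) * harmonicPairing X Y Z n) := by
        rw [harmonicPairing, Finset.mul_sum, Finset.mul_sum]
        refine Finset.sum_congr rfl fun m _ => ?_
        ring

theorem harmonicPairing_eq_pow (n : ℕ) :
    harmonicPairing X Y Z n = (Z ^ 2 - 4 * X * Y) ^ n := by
  induction n with
  | zero => simp [harmonicPairing, factorialWeight, harmonicPoly, gradedExpSum,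
      Finset.Nat.antidiagonalTuple_zero_right, sphGrade, Finset.sum_filter]
  | succ n ih => rw [harmonicPairing_succ, ih, ← pow_succ']

end Harmonic

open ComplexConjugate in
theorem sum_factorialWeight_mul_sq_norm_harmonicPoly {X Y Z : ℂ} (hX : conj X = -Y)
    (hZ : conj Z = Z) (n : ℕ) :
    ((∑ l ∈ Finset.Icc (-(n : ℤ)) n,
        factorialWeight n l * ‖harmonicPoly X Y Z n l‖ ^ 2 : ℝ) : ℂ) =
      (Z ^ 2 - 4 * X * Y) ^ n := by
  have hY : conj Y = -X := by rw [← neg_eq_iff_eq_neg.mpr hX, map_neg, Complex.conj_conj]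
  have hconj : ∀ l, conj (harmonicPoly X Y Z n l) = harmonicPoly (-Y) (-X) Z n l := by
    intro l
    rw [harmonicPoly, harmonicPoly, map_gradedExpSum]
    congr 1
    · ext i
      fin_cases i <;> simp [hX, hY, hZ]
    · ext
      simp
  rw [← harmonicPairing_eq_pow, harmonicPairing]
  push_cast
  refine Finset.sum_congr rfl fun l _ => ?_
  rw [mul_assoc, ← hconj, Complex.mul_conj']

/-- Unsöld's theorem: `Σ_{l=−k}^{k} |u_{k,l}(x)|² = (2k+1)/(4π)` on the unit sphere. -/
theorem unsold (k : ℕ) (x : EuclideanSpace ℝ (Fin 3)) (hx : ‖x‖ = 1) :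
    ∑ l ∈ Finset.Icc (-(k : ℤ)) (k : ℤ), ‖uSH k l x‖ ^ 2
      = (2 * (k : ℝ) + 1) / (4 * Real.pi) := by
  set X : ℂ := -(((x 0 : ℂ) + Complex.I * (x 1 : ℂ)) / 2)
  set Y : ℂ := ((x 0 : ℂ) - Complex.I * (x 1 : ℂ)) / 2
  set Z : ℂ := (x 2 : ℂ)
  have hsphere : Z ^ 2 - 4 * X * Y = 1 := by
    have h := EuclideanSpace.real_norm_sq_eq x
    rw [hx, one_pow, Fin.sum_univ_three] at h
    have h' : ((x 0 ^ 2 + x 1 ^ 2 + x 2 ^ 2 : ℝ) : ℂ) = 1 := by exact_mod_cast h.symm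
    push_cast at h'
    linear_combination h' - (x 1 : ℂ) ^ 2 * Complex.I_sq
  have hweights := sum_factorialWeight_mul_sq_norm_harmonicPoly (X := X) (Y := Y) (Z := Z)
    (by simp only [X, Y, map_neg, map_div₀, map_add, map_mul, Complex.conj_ofReal,
      Complex.conj_I, map_ofNat]; ring) (Complex.conj_ofReal _) k
  rw [hsphere, one_pow] at hweights
  have hu : ∀ l, ‖uSH k l x‖ ^ 2 =
      (2 * k + 1) / (4 * Real.pi) * (factorialWeight k l * ‖harmonicPoly X Y Z k l‖ ^ 2) := by
    intro l
    rw [uSH, sum_range_sum_range_eq_harmonicPoly, norm_mul, mul_pow, Complex.norm_real,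
      Real.norm_eq_abs, sq_abs, sphC, Real.sq_sqrt (by positivity), factorialWeight]
    push_cast
    ring
  rw [Finset.sum_congr rfl fun l _ => hu l, ← Finset.mul_sum,
    Complex.ofReal_eq_one.mp hweights, mul_one]
end
end

section
/- Let k ≥ 1 be an integer. For every integer l with −k+2 ≤ l ≤ k, the Wirtinger derivative ∂u_{k,l}/∂w := (1/2)(∂_x − i ∂_y)u_{k,l} satisfies ∂u_{k,l}/∂w = −( √((k+l−1)(k+l)(2k+1)) / (2√(2k−1)) ) · u_{k−1, l−1} identically on ℝ³. Moreover, for l ∈ {−k, −k+1} one has ∂u_{k,l}/∂w ≡ 0. -/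
open MeasureTheory Finset

noncomputable section

/-- The partial derivative `∂u/∂xᵢ` of a function `u : ℝ³ → ℂ`. -/
def pd (i : Fin 3) (u : EuclideanSpace ℝ (Fin 3) → ℂ) (x : EuclideanSpace ℝ (Fin 3)) : ℂ :=
  fderiv ℝ u x (EuclideanSpace.single i (1 : ℝ))

/-- `|∇u(x)|² = |∂_x u(x)|² + |∂_y u(x)|² + |∂_z u(x)|²`. -/
def gradSq (u : EuclideanSpace ℝ (Fin 3) → ℂ) (x : EuclideanSpace ℝ (Fin 3)) : ℝ :=
  ‖pd 0 u x‖ ^ 2 + ‖pd 1 u x‖ ^ 2 + ‖pd 2 u x‖ ^ 2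

/-- The Wirtinger derivative `∂u/∂w = (1/2)(∂_x − i ∂_y)u`. -/
def dW (u : EuclideanSpace ℝ (Fin 3) → ℂ) (x : EuclideanSpace ℝ (Fin 3)) : ℂ :=
  (1 / 2) * (pd 0 u x - Complex.I * pd 1 u x)

/-- The Wirtinger derivative `∂u/∂w̄ = (1/2)(∂_x + i ∂_y)u`. -/
def dWbar (u : EuclideanSpace ℝ (Fin 3) → ℂ) (x : EuclideanSpace ℝ (Fin 3)) : ℂ :=
  (1 / 2) * (pd 0 u x + Complex.I * pd 1 u x)

/-!
In the coordinates `w = x + iy`, `w̄`, `z`, the function `u_{k,l}` is `C_{k,l}` times a sum of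
monomials `(−w/2)^p (w̄/2)^q z^s / (p! q! s!)`. The Wirtinger derivative `∂/∂w` is a derivation
that kills `w̄` and `z` and sends `−w/2` to `−1/2`, so it maps the monomial of `(p, q, s)` to
`−1/2` times the monomial of `(p − 1, q, s)`: this lowers `(k, l)` to `(k − 1, l − 1)`. The terms
with `p = 0` die, and for `l ≤ 1 − k` these are all the terms. What is left is the identity
`C_{k,l} / 2 = (√((k+l−1)(k+l)(2k+1)) / (2√(2k−1))) · C_{k−1,l−1}`.
-/

local notation "ℝ³" => EuclideanSpace ℝ (Fin 3)

@[fun_prop]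
theorem Differentiable.ite_zero {𝕜 E F : Type*} [NontriviallyNormedField 𝕜]
    [NormedAddCommGroup E] [NormedSpace 𝕜 E] [NormedAddCommGroup F] [NormedSpace 𝕜 F]
    (P : Prop) [Decidable P] {f : E → F} (hf : Differentiable 𝕜 f) :
    Differentiable 𝕜 (fun y => if P then f y else 0) := by
  split_ifs
  exacts [hf, differentiable_const 0]

section Wirtinger

variable {u v : ℝ³ → ℂ} {x : ℝ³}

theorem dW_const (c : ℂ) : dW (fun _ => c) x = 0 := by
  simp [dW, pd]

theorem dW_fun_mul (hu : DifferentiableAt ℝ u x) (hv : DifferentiableAt ℝ v x) :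
    dW (fun y => u y * v y) x = dW u x * v x + u x * dW v x := by
  simp only [dW, pd, fderiv_fun_mul hu hv, add_apply, smul_apply, smul_eq_mul]
  ring

theorem dW_const_mul (hu : DifferentiableAt ℝ u x) (c : ℂ) :
    dW (fun y => c * u y) x = c * dW u x := by
  rw [dW_fun_mul (differentiableAt_const c) hu, dW_const]
  ring

theorem dW_fun_pow (hu : DifferentiableAt ℝ u x) (n : ℕ) :
    dW (fun y => u y ^ n) x = n * u x ^ (n - 1) * dW u x := by
  simp only [dW, pd, fderiv_fun_pow n hu, smul_apply, smul_eq_mul, nsmul_eq_mul]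
  ring

theorem dW_fun_sum {ι : Type*} {s : Finset ι} {f : ι → ℝ³ → ℂ}
    (hf : ∀ i ∈ s, DifferentiableAt ℝ (f i) x) :
    dW (fun y => ∑ i ∈ s, f i y) x = ∑ i ∈ s, dW (f i) x := by
  simp only [dW, pd, fderiv_fun_sum hf, _root_.sum_apply, mul_sum, ← sum_sub_distrib]

theorem dW_ite_zero (P : Prop) [Decidable P] :
    dW (fun y => if P then u y else 0) x = if P then dW u x else 0 := by
  split_ifs <;> simp [dW_const]

theorem hasFDerivAt_ofReal_apply (j : Fin 3) :
    HasFDerivAt (fun y : ℝ³ => (y j : ℂ)) (Complex.ofRealCLM.comp (EuclideanSpace.proj j)) x :=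
  Complex.ofRealCLM.hasFDerivAt.comp x (EuclideanSpace.proj (𝕜 := ℝ) j).hasFDerivAt

@[fun_prop]
theorem differentiable_ofReal_apply (j : Fin 3) : Differentiable ℝ (fun y : ℝ³ => (y j : ℂ)) :=
  fun _ => (hasFDerivAt_ofReal_apply j).differentiableAt

def negHalfW (y : ℝ³) : ℂ := -(((y 0 : ℂ) + Complex.I * (y 1 : ℂ)) / 2)

def halfConjW (y : ℝ³) : ℂ := ((y 0 : ℂ) - Complex.I * (y 1 : ℂ)) / 2

@[fun_prop]
theorem differentiable_negHalfW : Differentiable ℝ negHalfW := by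
  unfold negHalfW; fun_prop

@[fun_prop]
theorem differentiable_halfConjW : Differentiable ℝ halfConjW := by
  unfold halfConjW; fun_prop

theorem dW_negHalfW : dW negHalfW x = -1 / 2 := by
  have h := (((hasFDerivAt_ofReal_apply (x := x) 0).fun_add
    ((hasFDerivAt_ofReal_apply 1).const_mul Complex.I)).mul_const (2⁻¹ : ℂ)).fun_neg
  simp only [← div_eq_mul_inv] at h
  unfold negHalfW
  norm_num [dW, pd, h.fderiv, mul_left_comm Complex.I]

theorem dW_halfConjW : dW halfConjW x = 0 := by
  have h := ((hasFDerivAt_ofReal_apply (x := x) 0).fun_sub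
    ((hasFDerivAt_ofReal_apply 1).const_mul Complex.I)).mul_const (2⁻¹ : ℂ)
  simp only [← div_eq_mul_inv] at h
  unfold halfConjW
  simp [dW, pd, h.fderiv, mul_left_comm Complex.I]

theorem dW_ofReal_apply_two : dW (fun y : ℝ³ => (y 2 : ℂ)) x = 0 := by
  simp [dW, pd, (hasFDerivAt_ofReal_apply 2).fderiv]

theorem dW_monomial (c : ℂ) (p q r : ℕ) :
    dW (fun y => c * negHalfW y ^ p * halfConjW y ^ q * (y 2 : ℂ) ^ r) x
      = -(p / 2) * c * negHalfW x ^ (p - 1) * halfConjW x ^ q * (x 2 : ℂ) ^ r := by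
  rw [dW_fun_mul (by fun_prop) (by fun_prop), dW_fun_mul (by fun_prop) (by fun_prop),
    dW_const_mul (by fun_prop), dW_fun_pow (by fun_prop), dW_fun_pow (by fun_prop),
    dW_fun_pow (by fun_prop), dW_negHalfW, dW_halfConjW, dW_ofReal_apply_two]
  ring

end Wirtinger

def shTerm (k p q : ℕ) (x : ℝ³) : ℂ :=
  (1 / ((p.factorial : ℂ) * (q.factorial : ℂ) * ((k - p - q).factorial : ℂ))) *
    negHalfW x ^ p * halfConjW x ^ q * (x 2 : ℂ) ^ (k - p - q)

def shPoly (k : ℕ) (l : ℤ) (x : ℝ³) : ℂ :=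
  ∑ p ∈ range (k + 1), ∑ q ∈ range (k + 1),
    if (p : ℤ) - q = l ∧ p + q ≤ k then shTerm k p q x else 0

theorem uSH_eq_mul_shPoly (k : ℕ) (l : ℤ) : uSH k l = fun x => (sphC k l : ℂ) * shPoly k l x :=
  rfl

@[fun_prop]
theorem differentiable_shTerm (k p q : ℕ) : Differentiable ℝ (shTerm k p q) := by
  unfold shTerm; fun_prop

@[fun_prop]
theorem differentiable_shPoly (k : ℕ) (l : ℤ) : Differentiable ℝ (shPoly k l) := by
  unfold shPoly; fun_prop

section Lowering

variable {x : ℝ³}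

theorem dW_shTerm_zero (k q : ℕ) : dW (shTerm k 0 q) x = 0 := by
  unfold shTerm
  rw [dW_monomial, Nat.cast_zero]
  ring

theorem dW_shTerm_succ (m p q : ℕ) :
    dW (shTerm (m + 1) (p + 1) q) x = -1 / 2 * shTerm m p q x := by
  unfold shTerm
  rw [dW_monomial, Nat.add_sub_cancel, Nat.add_sub_add_right, Nat.factorial_succ]
  push_cast
  field_simp

theorem dW_shPoly (k : ℕ) (l : ℤ) :
    dW (shPoly k l) x = ∑ p ∈ range (k + 1), ∑ q ∈ range (k + 1),
      if (p : ℤ) - q = l ∧ p + q ≤ k then dW (shTerm k p q) x else 0 := by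
  have hd (p q : ℕ) : Differentiable ℝ
      (fun y => if (p : ℤ) - q = l ∧ p + q ≤ k then shTerm k p q y else 0) := by
    fun_prop
  unfold shPoly
  rw [dW_fun_sum fun p _ => (Differentiable.fun_sum fun q _ => hd p q).differentiableAt]
  simp only [dW_fun_sum fun q _ => (hd _ q).differentiableAt, dW_ite_zero]

theorem dW_shPoly_succ (m : ℕ) (l : ℤ) :
    dW (shPoly (m + 1) l) x = -1 / 2 * shPoly m (l - 1) x := by
  rw [dW_shPoly, sum_range_succ', shPoly, mul_sum]
  have hp_zero : ∑ q ∈ range (m + 1 + 1), (if ((0 : ℕ) : ℤ) - q = l ∧ 0 + q ≤ m + 1 then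
      dW (shTerm (m + 1) 0 q) x else 0) = 0 :=
    sum_eq_zero fun q _ => by simp only [dW_shTerm_zero, ite_self]
  rw [hp_zero, add_zero]
  refine sum_congr rfl fun p _ => ?_
  rw [sum_range_succ, if_neg (by omega), add_zero, mul_sum]
  refine sum_congr rfl fun q _ => ?_
  rw [dW_shTerm_succ, mul_ite_zero]
  refine if_congr ?_ rfl rfl
  push_cast
  omega

theorem dW_shPoly_eq_zero {k : ℕ} {l : ℤ} (hl : l ≤ 1 - k) : dW (shPoly k l) x = 0 := by
  rw [dW_shPoly]
  refine sum_eq_zero fun p _ => sum_eq_zero fun q _ => ?_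
  split_ifs with h
  · obtain rfl : p = 0 := by omega
    exact dW_shTerm_zero k q
  · rfl

end Lowering

theorem sphC_succ (m : ℕ) {l : ℤ} (hl : 1 - (m : ℤ) ≤ l) :
    sphC (m + 1) l / 2
      = Real.sqrt (((m : ℝ) + 1 + l - 1) * ((m : ℝ) + 1 + l) * (2 * ((m : ℝ) + 1) + 1))
        / (2 * Real.sqrt (2 * ((m : ℝ) + 1) - 1)) * sphC m (l - 1) := by
  obtain ⟨b, hb⟩ : ∃ b : ℕ, (m : ℤ) + (l - 1) = b := ⟨_, (Int.toNat_of_nonneg (by omega)).symm⟩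
  have hsum : ((m + 1 : ℕ) : ℤ) + l = (b + 2 : ℕ) := by push_cast; omega
  have hdiff : ((m + 1 : ℕ) : ℤ) - l = (m : ℤ) - (l - 1) := by push_cast; ring
  have hsumR : (m : ℝ) + 1 + l = b + 2 := by exact_mod_cast (by omega : (m : ℤ) + 1 + l = b + 2)
  have hsumR' : (m : ℝ) + 1 + l - 1 = b + 1 := by linarith
  have hm : (0 : ℝ) < 2 * ((m : ℝ) + 1) - 1 := by linarith [(m.cast_nonneg : (0 : ℝ) ≤ m)]
  unfold sphC
  rw [hsum, hdiff, hb, Int.toNat_natCast, Int.toNat_natCast, hsumR', hsumR]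
  set D : ℝ := (((m : ℤ) - (l - 1)).toNat.factorial : ℝ)
  symm
  calc _ = Real.sqrt (((b : ℝ) + 1) * (b + 2) * (2 * (m + 1) + 1)
          * ((2 * m + 1) / (4 * Real.pi) * b.factorial * D) / (2 * (m + 1) - 1)) / 2 := by
        rw [Real.sqrt_div' _ hm.le,
          Real.sqrt_mul (x := ((b : ℝ) + 1) * (b + 2) * (2 * (m + 1) + 1)) (by positivity)]
        ring
    _ = _ := by
        congr 2
        field_simp
        push_cast [Nat.factorial_succ]
        ring

theorem dW_uSH_general (k : ℕ) :
    (∀ l : ℤ, -(k : ℤ) + 2 ≤ l → l ≤ (k : ℤ) → ∀ x : EuclideanSpace ℝ (Fin 3),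
      dW (uSH k l) x
        = -((Real.sqrt (((k : ℝ) + l - 1) * ((k : ℝ) + l) * (2 * (k : ℝ) + 1))
            / (2 * Real.sqrt (2 * (k : ℝ) - 1)) : ℝ) : ℂ) * uSH (k - 1) (l - 1) x) ∧
    (∀ l : ℤ, (l = -(k : ℤ) ∨ l = -(k : ℤ) + 1) → ∀ x : EuclideanSpace ℝ (Fin 3),
      dW (uSH k l) x = 0) := by
  refine ⟨fun l hl2 _ x => ?_, fun l hl x => ?_⟩
  · obtain ⟨m, rfl⟩ : ∃ m, k = m + 1 := ⟨k - 1, by omega⟩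
    have hconst := congrArg ((↑) : ℝ → ℂ) (sphC_succ m (l := l) (by omega))
    rw [uSH_eq_mul_shPoly, uSH_eq_mul_shPoly, dW_const_mul (by fun_prop), dW_shPoly_succ,
      Nat.add_sub_cancel]
    push_cast at hconst ⊢
    linear_combination (-shPoly m (l - 1) x) * hconst
  · rw [uSH_eq_mul_shPoly, dW_const_mul (by fun_prop), dW_shPoly_eq_zero (by omega), mul_zero]

/-- The Wirtinger derivative `∂u_{k,l}/∂w` lowers both indices:
`∂u_{k,l}/∂w = −(√((k+l−1)(k+l)(2k+1))/(2√(2k−1))) u_{k−1,l−1}` for `−k+2 ≤ l ≤ k`,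
and `∂u_{k,l}/∂w ≡ 0` for `l ∈ {−k, −k+1}`. -/
theorem dW_uSH (k : ℕ) (hk : 1 ≤ k) :
    (∀ l : ℤ, -(k : ℤ) + 2 ≤ l → l ≤ (k : ℤ) → ∀ x : EuclideanSpace ℝ (Fin 3),
      dW (uSH k l) x
        = -((Real.sqrt (((k : ℝ) + l - 1) * ((k : ℝ) + l) * (2 * (k : ℝ) + 1))
            / (2 * Real.sqrt (2 * (k : ℝ) - 1)) : ℝ) : ℂ) * uSH (k - 1) (l - 1) x) ∧
    (∀ l : ℤ, (l = -(k : ℤ) ∨ l = -(k : ℤ) + 1) → ∀ x : EuclideanSpace ℝ (Fin 3),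
      dW (uSH k l) x = 0) :=
  dW_uSH_general k
end
end

section
/- For all integers k ≥ 0 and −k ≤ l ≤ k, the function u_{k,l} is a homogeneous polynomial of degree k in (x,y,z) (i.e. u_{k,l}(t·v) = t^k u_{k,l}(v) for all t ∈ ℝ and v ∈ ℝ³) and is harmonic on ℝ³, i.e. ∂²u_{k,l}/∂x² + ∂²u_{k,l}/∂y² + ∂²u_{k,l}/∂z² = 0 identically. -/
open MeasureTheory Finset

noncomputable section

/-! With `w = x + i y`, the coefficient vectors in `ℂ³` of the real-linear forms `-w/2`, `w̄/2`
and `z` pair (complex-bilinearly, without conjugation) to zero except `⟨-w/2, w̄/2⟩ = -1/2` and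
`⟨z, z⟩ = 1`. Hence on the divided-power monomials
`G(a,b,c) = (-w/2)^a (w̄/2)^b z^c / (a! b! c!)` the Laplacian acts as
`Δ G(a,b,c) = G(a,b,c-2) - G(a-1,b-1,c)`. The terms of `u_{k,l}` are `G(p, p-l, k-2p+l)`, so
`Δ u_{k,l}` telescopes in `p` to two boundary terms, each with a negative index, hence zero.
Homogeneity is immediate, since every term has total degree `k`. -/

namespace SolidHarmonic

open Nat

/-- `z ^ n / n!`, extended by `0` to negative `n`, so that `dpow n` has derivative `dpow (n - 1)`
for every `n : ℤ`. -/
def dpow : ℤ → ℂ → ℂ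
  | .ofNat n, z => z ^ n / n !
  | .negSucc _, _ => 0

theorem dpow_natCast (n : ℕ) (z : ℂ) : dpow n z = z ^ n / n ! := rfl

theorem dpow_of_neg {n : ℤ} (hn : n < 0) (z : ℂ) : dpow n z = 0 := by
  rcases n with n | n
  · simp only [Int.ofNat_eq_natCast] at hn; omega
  · rfl

theorem hasDerivAt_dpow (n : ℤ) (z : ℂ) : HasDerivAt (dpow n) (dpow (n - 1) z) z := by
  rcases n with (_ | m) | m
  · rw [dpow_of_neg (by decide)]
    exact (hasDerivAt_const z (1 : ℂ)).congr_of_eventuallyEq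
      (Filter.Eventually.of_forall fun w => by simp [dpow])
  · have h := (hasDerivAt_pow (m + 1) z).div_const ((m + 1) ! : ℂ)
    refine h.congr_deriv ?_
    rw [show Int.ofNat (m + 1) - 1 = (m : ℤ) by simp, dpow_natCast, factorial_succ]
    push_cast
    field_simp
  · exact hasDerivAt_const z (0 : ℂ)

theorem dpow_mul (n : ℤ) (t z : ℂ) : dpow n (t * z) = t ^ n.toNat * dpow n z := by
  rcases n with n | n
  · simp only [dpow, Int.ofNat_eq_natCast, Int.toNat_natCast]
    ring
  · simp [dpow]

theorem contDiff_dpow (n : ℤ) {m : WithTop ℕ∞} : ContDiff ℝ m (dpow n) := by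
  rcases n with n | n
  · exact (contDiff_id.pow n).div_const _
  · exact contDiff_const

section Monomial

variable {E : Type*} [NormedAddCommGroup E] [NormedSpace ℝ E] (α β γ : E →L[ℝ] ℂ)

def dmon (a b c : ℤ) (x : E) : ℂ := dpow a (α x) * dpow b (β x) * dpow c (γ x)

theorem contDiff_dmon (a b c : ℤ) {n : WithTop ℕ∞} : ContDiff ℝ n (dmon α β γ a b c) :=
  (((contDiff_dpow a).comp α.contDiff).mul ((contDiff_dpow b).comp β.contDiff)).mul
    ((contDiff_dpow c).comp γ.contDiff)

theorem fderiv_dmon_apply (a b c : ℤ) (x v : E) :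
    fderiv ℝ (dmon α β γ a b c) x v =
      α v * dmon α β γ (a - 1) b c x + β v * dmon α β γ a (b - 1) c x +
        γ v * dmon α β γ a b (c - 1) x := by
  have hα := (hasDerivAt_dpow a (α x)).comp_hasFDerivAt x α.hasFDerivAt
  have hβ := (hasDerivAt_dpow b (β x)).comp_hasFDerivAt x β.hasFDerivAt
  have hγ := (hasDerivAt_dpow c (γ x)).comp_hasFDerivAt x γ.hasFDerivAt
  have h : HasFDerivAt (dmon α β γ a b c) _ x := (hα.mul hβ).mul hγ
  rw [h.fderiv]
  simp only [dmon, add_apply, smul_apply,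
    smul_eq_mul, Pi.mul_apply, Function.comp_apply]
  ring

theorem fderiv_fderiv_dmon_apply (a b c : ℤ) (x v : E) :
    fderiv ℝ (fun y => fderiv ℝ (dmon α β γ a b c) y v) x v =
      α v * fderiv ℝ (dmon α β γ (a - 1) b c) x v +
        β v * fderiv ℝ (dmon α β γ a (b - 1) c) x v +
        γ v * fderiv ℝ (dmon α β γ a b (c - 1)) x v := by
  have hd (a b c : ℤ) : Differentiable ℝ (dmon α β γ a b c) :=
    (contDiff_dmon α β γ a b c).differentiable one_ne_zero
  simp only [fderiv_dmon_apply]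
  rw [fderiv_fun_add (by fun_prop) (by fun_prop), fderiv_fun_add (by fun_prop) (by fun_prop),
    fderiv_const_mul (by fun_prop), fderiv_const_mul (by fun_prop),
    fderiv_const_mul (by fun_prop)]
  simp only [add_apply, smul_apply, smul_eq_mul, fderiv_dmon_apply]

theorem dmon_eq_zero {a b c : ℤ} (h : a < 0 ∨ b < 0 ∨ c < 0) (x : E) :
    dmon α β γ a b c x = 0 := by
  rcases h with h | h | h <;> simp [dmon, dpow_of_neg h]

theorem dmon_smul {a b c : ℤ} {n : ℕ} (h : a + b + c = n) (t : ℝ) (x : E) :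
    dmon α β γ a b c (t • x) = (t : ℂ) ^ n * dmon α β γ a b c x := by
  by_cases hpos : 0 ≤ a ∧ 0 ≤ b ∧ 0 ≤ c
  · simp only [dmon, map_smul, Complex.real_smul, dpow_mul]
    rw [show n = a.toNat + b.toNat + c.toNat by omega, pow_add, pow_add]
    ring
  · rw [dmon_eq_zero α β γ (by omega), dmon_eq_zero α β γ (by omega), mul_zero]

end Monomial

local notation "ℝ³" => EuclideanSpace ℝ (Fin 3)

section Laplacian

def lap (u : ℝ³ → ℂ) (x : ℝ³) : ℂ := ∑ j, pd j (pd j u) x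

variable {ι : Type*} (s : Finset ι) (c : ℂ) (f : ι → ℝ³ → ℂ)

theorem pd_const_mul_sum (hf : ∀ i ∈ s, Differentiable ℝ (f i)) (j : Fin 3) :
    pd j (fun x => c * ∑ i ∈ s, f i x) = fun x => c * ∑ i ∈ s, pd j (f i) x := by
  funext x
  rw [pd, fderiv_const_mul (DifferentiableAt.fun_sum fun i hi => (hf i hi).differentiableAt),
    fderiv_fun_sum fun i hi => (hf i hi).differentiableAt]
  simp [pd]

theorem differentiable_pd {u : ℝ³ → ℂ} (hu : ContDiff ℝ 2 u) (j : Fin 3) :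
    Differentiable ℝ (pd j u) :=
  ((hu.fderiv_right (by norm_num)).clm_apply contDiff_const).differentiable one_ne_zero

theorem lap_const_mul_sum (hf : ∀ i ∈ s, ContDiff ℝ 2 (f i)) (x : ℝ³) :
    lap (fun x => c * ∑ i ∈ s, f i x) x = c * ∑ i ∈ s, lap (f i) x := by
  have hpd (j : Fin 3) : pd j (pd j fun x => c * ∑ i ∈ s, f i x) =
      fun x => c * ∑ i ∈ s, pd j (pd j (f i)) x := by
    rw [pd_const_mul_sum s c f (fun i hi => (hf i hi).differentiable two_ne_zero),
      pd_const_mul_sum s c _ fun i hi => differentiable_pd (hf i hi) j]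
  simp only [lap, hpd, ← mul_sum]
  rw [sum_comm]

end Laplacian

section NullFrame

open Complex

def negHalfW : ℝ³ →L[ℝ] ℂ :=
  (-(1 / 2) : ℂ) •
    (ofRealCLM.comp (EuclideanSpace.proj 0) + I • ofRealCLM.comp (EuclideanSpace.proj 1))

def halfWbar : ℝ³ →L[ℝ] ℂ :=
  ((1 / 2) : ℂ) •
    (ofRealCLM.comp (EuclideanSpace.proj 0) - I • ofRealCLM.comp (EuclideanSpace.proj 1))

def zCoord : ℝ³ →L[ℝ] ℂ := ofRealCLM.comp (EuclideanSpace.proj 2)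

@[simp] theorem negHalfW_apply (x : ℝ³) :
    negHalfW x = -(((x 0 : ℂ) + I * (x 1 : ℂ)) / 2) := by
  simp [negHalfW]; ring

@[simp] theorem halfWbar_apply (x : ℝ³) : halfWbar x = ((x 0 : ℂ) - I * (x 1 : ℂ)) / 2 := by
  simp [halfWbar]; ring

@[simp] theorem zCoord_apply (x : ℝ³) : zCoord x = (x 2 : ℂ) := by
  simp [zCoord]

local notation "𝒴" => dmon negHalfW halfWbar zCoord

theorem lap_dmon (a b c : ℤ) (x : ℝ³) :
    lap (𝒴 a b c) x = 𝒴 a b (c - 2) x - 𝒴 (a - 1) (b - 1) c x := by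
  simp only [lap, Fin.sum_univ_three]
  unfold pd
  simp only [fderiv_fderiv_dmon_apply]
  simp only [fderiv_dmon_apply, negHalfW_apply, halfWbar_apply, zCoord_apply, PiLp.single_apply,
    Fin.reduceEq, if_true, if_false, ofReal_one, ofReal_zero]
  rw [show c - 1 - 1 = c - 2 by ring]
  linear_combination
    (𝒴 (a - 1 - 1) b c x + 2 * 𝒴 (a - 1) (b - 1) c x + 𝒴 a (b - 1 - 1) c x) / 4 * I_sq

theorem dmon_natCast (p q s : ℕ) (x : ℝ³) :
    𝒴 p q s x = 1 / ((p ! : ℂ) * (q ! : ℂ) * (s ! : ℂ)) *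
      (-(((x 0 : ℂ) + I * (x 1 : ℂ)) / 2)) ^ p * (((x 0 : ℂ) - I * (x 1 : ℂ)) / 2) ^ q *
        (x 2 : ℂ) ^ s := by
  simp only [dmon, dpow_natCast, negHalfW_apply, halfWbar_apply, zCoord_apply]
  ring

theorem uSH_inner_sum (k p : ℕ) (l : ℤ) (x : ℝ³) :
    (∑ q ∈ range (k + 1),
      if (p : ℤ) - (q : ℤ) = l ∧ p + q ≤ k then
        (1 / ((p ! : ℂ) * (q ! : ℂ) * ((k - p - q) ! : ℂ))) *
          (-(((x 0 : ℂ) + I * (x 1 : ℂ)) / 2)) ^ p *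
          ((((x 0 : ℂ) - I * (x 1 : ℂ))) / 2) ^ q * ((x 2 : ℂ)) ^ (k - p - q)
      else 0) = 𝒴 p (p - l) (k - 2 * p + l) x := by
  have hterm (q : ℕ) : (if (p : ℤ) - (q : ℤ) = l ∧ p + q ≤ k then
        (1 / ((p ! : ℂ) * (q ! : ℂ) * ((k - p - q) ! : ℂ))) *
          (-(((x 0 : ℂ) + I * (x 1 : ℂ)) / 2)) ^ p *
          ((((x 0 : ℂ) - I * (x 1 : ℂ))) / 2) ^ q * ((x 2 : ℂ)) ^ (k - p - q)
      else 0) = if (q : ℤ) = p - l then 𝒴 p (p - l) (k - 2 * p + l) x else 0 := by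
    by_cases hq : (q : ℤ) = p - l
    · rw [if_pos hq]
      by_cases hk : p + q ≤ k
      · rw [if_pos ⟨by omega, hk⟩, ← dmon_natCast, ← hq]
        congr
        omega
      · rw [if_neg (by omega), dmon_eq_zero _ _ _ (by omega) x]
    · rw [if_neg (by omega), if_neg hq]
  rw [sum_congr rfl fun q _ => hterm q]
  by_cases hl : 0 ≤ (p : ℤ) - l ∧ (p : ℤ) - l ≤ k
  · rw [sum_eq_single_of_mem ((p : ℤ) - l).toNat (mem_range.mpr (by omega))
      fun q _ hq => if_neg (by omega), if_pos (by omega)]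
  · rw [dmon_eq_zero _ _ _ (by omega) x]
    simp

theorem uSH_eq_sum (k : ℕ) (l : ℤ) :
    uSH k l = fun x =>
      (sphC k l : ℂ) * ∑ p ∈ range (k + 1), 𝒴 p (p - l) (k - 2 * p + l) x := by
  funext x
  simp only [uSH, uSH_inner_sum]

theorem lap_uSH (k : ℕ) (l : ℤ) (x : ℝ³) : lap (uSH k l) x = 0 := by
  set H : ℤ → ℂ := fun p => 𝒴 p (p - l) (k - 2 * p + l - 2) x
  have hstep (p : ℕ) : lap (𝒴 p (p - l) (k - 2 * p + l)) x = H p - H (p - 1) := by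
    rw [lap_dmon]
    simp only [H]
    ring_nf
  rw [uSH_eq_sum, lap_const_mul_sum _ _ _ fun p _ => contDiff_dmon _ _ _ _ _ _]
  have htel := sum_range_sub (fun i : ℕ => H (i - 1)) (k + 1)
  push_cast at htel
  simp only [add_sub_cancel_right] at htel
  rw [sum_congr rfl fun p _ => hstep p, htel]
  have hk : H k = 0 := dmon_eq_zero _ _ _ (by omega) x
  have hneg : H (-1) = 0 := dmon_eq_zero _ _ _ (by omega) x
  rw [hk, hneg, sub_zero, mul_zero]

end NullFrame

end SolidHarmonic

open SolidHarmonic in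
theorem uSH_homogeneous_harmonic_general (k : ℕ) (l : ℤ) :
    (∀ (t : ℝ) (v : EuclideanSpace ℝ (Fin 3)), uSH k l (t • v) = (t : ℂ) ^ k * uSH k l v) ∧
    (∀ x : EuclideanSpace ℝ (Fin 3),
      pd 0 (pd 0 (uSH k l)) x + pd 1 (pd 1 (uSH k l)) x + pd 2 (pd 2 (uSH k l)) x = 0) := by
  refine ⟨fun t v => ?_, fun x => ?_⟩
  · simp only [uSH_eq_sum, mul_sum]
    refine sum_congr rfl fun p _ => ?_
    rw [dmon_smul _ _ _ (n := k) (by ring) t v]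
    ring
  · simpa only [lap, Fin.sum_univ_three] using lap_uSH k l x

/-- `u_{k,l}` is homogeneous of degree `k` and harmonic on `ℝ³`. -/
theorem uSH_homogeneous_harmonic (k : ℕ) (l : ℤ) (hl₁ : -(k : ℤ) ≤ l) (hl₂ : l ≤ (k : ℤ)) :
    (∀ (t : ℝ) (v : EuclideanSpace ℝ (Fin 3)), uSH k l (t • v) = (t : ℂ) ^ k * uSH k l v) ∧
    (∀ x : EuclideanSpace ℝ (Fin 3),
      pd 0 (pd 0 (uSH k l)) x + pd 1 (pd 1 (uSH k l)) x + pd 2 (pd 2 (uSH k l)) x = 0) :=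
  uSH_homogeneous_harmonic_general k l
end
end
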